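/- Let A = U·D·U⁻¹ be a real 3×3 matrix with U invertible and D = diag(λ1, λ2, λ3) real diagonal. Then (2/(9·κ₂²))·J2(A) ≤ ‖dev(A)‖_F² ≤ 18·κ₂²·J2(A), where κ₂ = ‖U‖₂·‖U⁻¹‖₂. -/

import Mathlib

/-!
Conjugation by `U` commutes with `dev` and preserves `J2`, so `dev A = U N U⁻¹` with
`N = dev D` diagonal, and `2 J2(A) = 2 J2(D) = ‖N‖_F²` because `N` is symmetric.
Both bounds then follow by applying `‖XYZ‖_F ≤ ‖X‖_F ‖Y‖_F ‖Z‖_F` together with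
`‖X‖_F² ≤ 3 ‖X‖₂²` to `dev A = U N U⁻¹` and to `N = U⁻¹ (dev A) U`.
-/

noncomputable def dev (A : Matrix (Fin 3) (Fin 3) ℝ) : Matrix (Fin 3) (Fin 3) ℝ :=
  A - (Matrix.trace A / 3) • (1 : Matrix (Fin 3) (Fin 3) ℝ)

noncomputable def J2 (A : Matrix (Fin 3) (Fin 3) ℝ) : ℝ :=
  (1 / 2) * Matrix.trace (dev A * dev A)

/-- The Frobenius norm `‖X‖_F = √(tr(Xᵀ·X))`. -/
noncomputable def frobNorm (X : Matrix (Fin 3) (Fin 3) ℝ) : ℝ :=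
  Real.sqrt (Matrix.trace (X.transpose * X))

/-- The spectral norm: the operator norm induced by the Euclidean vector norm. -/
noncomputable def specNorm (U : Matrix (Fin 3) (Fin 3) ℝ) : ℝ :=
  ‖LinearMap.toContinuousLinearMap (Matrix.toEuclideanLin U)‖

attribute [local instance] Matrix.frobeniusNormedAddCommGroup

namespace Matrix

variable {m n : Type*} [Fintype m] [Fintype n]

theorem frobenius_norm_sq_eq_sum (X : Matrix m n ℝ) : ‖X‖ ^ 2 = ∑ i, ∑ j, X i j ^ 2 := by
  rw [frobenius_norm_def, ← Real.sqrt_eq_rpow, Real.sq_sqrt (by positivity)]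
  simp only [Real.rpow_two, Real.norm_eq_abs, sq_abs]

theorem trace_transpose_mul_self {R : Type*} [CommSemiring R] (X : Matrix m n R) :
    trace (Xᵀ * X) = ∑ i, ∑ j, X i j ^ 2 := by
  rw [trace, Finset.sum_comm]
  simp [mul_apply, sq]

theorem sum_sq_col_le_opNorm_sq [DecidableEq n] (X : Matrix m n ℝ) (j : n) :
    ∑ i, X i j ^ 2 ≤ ‖LinearMap.toContinuousLinearMap (toEuclideanLin X)‖ ^ 2 := by
  set T := LinearMap.toContinuousLinearMap (toEuclideanLin X)
  have hcol : T (EuclideanSpace.single j 1) = WithLp.toLp 2 (fun i => X i j) := by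
    ext i; simp [T, mulVec, dotProduct, Pi.single_apply]
  calc ∑ i, X i j ^ 2 = ‖T (EuclideanSpace.single j 1)‖ ^ 2 := by
        rw [hcol, EuclideanSpace.norm_sq_eq]; simp
    _ ≤ ‖T‖ ^ 2 := by
        gcongr
        simpa using T.le_opNorm (EuclideanSpace.single j 1)

theorem frobenius_norm_sq_le_card_mul_opNorm_sq [DecidableEq n] (X : Matrix m n ℝ) :
    ‖X‖ ^ 2 ≤ Fintype.card n * ‖LinearMap.toContinuousLinearMap (toEuclideanLin X)‖ ^ 2 := by
  calc ‖X‖ ^ 2 = ∑ j, ∑ i, X i j ^ 2 := by rw [frobenius_norm_sq_eq_sum, Finset.sum_comm]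
    _ ≤ ∑ _j : n, ‖LinearMap.toContinuousLinearMap (toEuclideanLin X)‖ ^ 2 :=
        Finset.sum_le_sum fun j _ => X.sum_sq_col_le_opNorm_sq j
    _ = _ := by simp

end Matrix

open Matrix

theorem frobNorm_eq_norm (X : Matrix (Fin 3) (Fin 3) ℝ) : frobNorm X = ‖X‖ := by
  rw [frobNorm, trace_transpose_mul_self, ← frobenius_norm_sq_eq_sum,
    Real.sqrt_sq (norm_nonneg X)]

theorem frobNorm_mul_mul_sq_le (X Y Z : Matrix (Fin 3) (Fin 3) ℝ) :
    frobNorm (X * Y * Z) ^ 2 ≤ 9 * (specNorm X * specNorm Z) ^ 2 * frobNorm Y ^ 2 := by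
  have hX : ‖X‖ ^ 2 ≤ 3 * specNorm X ^ 2 := by
    simpa [specNorm] using frobenius_norm_sq_le_card_mul_opNorm_sq X
  have hZ : ‖Z‖ ^ 2 ≤ 3 * specNorm Z ^ 2 := by
    simpa [specNorm] using frobenius_norm_sq_le_card_mul_opNorm_sq Z
  have hXYZ : ‖X * Y * Z‖ ≤ ‖X‖ * ‖Y‖ * ‖Z‖ :=
    (frobenius_norm_mul _ _).trans (by gcongr; exact frobenius_norm_mul _ _)
  simp only [frobNorm_eq_norm]
  calc ‖X * Y * Z‖ ^ 2 ≤ ‖X‖ ^ 2 * ‖Z‖ ^ 2 * ‖Y‖ ^ 2 := by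
        rw [← mul_pow, ← mul_pow]; gcongr; linarith
    _ ≤ (3 * specNorm X ^ 2) * (3 * specNorm Z ^ 2) * ‖Y‖ ^ 2 := by gcongr
    _ = _ := by ring

theorem dev_conj {U : Matrix (Fin 3) (Fin 3) ℝ} (hU : IsUnit U) (X : Matrix (Fin 3) (Fin 3) ℝ) :
    dev (U * X * U⁻¹) = U * dev X * U⁻¹ := by
  rw [dev, dev, trace_conj hU, Matrix.mul_sub, Matrix.sub_mul, mul_smul_comm, smul_mul_assoc,
    Matrix.mul_one, mul_nonsing_inv U ((isUnit_iff_isUnit_det U).mp hU)]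

theorem J2_conj {U : Matrix (Fin 3) (Fin 3) ℝ} (hU : IsUnit U) (X : Matrix (Fin 3) (Fin 3) ℝ) :
    J2 (U * X * U⁻¹) = J2 X := by
  have hUU : U⁻¹ * U = 1 := nonsing_inv_mul U ((isUnit_iff_isUnit_det U).mp hU)
  rw [J2, J2, dev_conj hU, ← trace_conj hU (dev X * dev X)]
  simp only [Matrix.mul_assoc]
  rw [← Matrix.mul_assoc U⁻¹ U, hUU, Matrix.one_mul]

theorem Matrix.IsSymm.dev {X : Matrix (Fin 3) (Fin 3) ℝ} (hX : X.IsSymm) : (dev X).IsSymm :=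
  hX.sub (isSymm_one.smul _)

theorem two_mul_J2_of_isSymm {X : Matrix (Fin 3) (Fin 3) ℝ} (hX : X.IsSymm) :
    2 * J2 X = frobNorm (dev X) ^ 2 := by
  rw [J2, frobNorm, Real.sq_sqrt, hX.dev.eq]
  · ring
  · rw [trace_transpose_mul_self]; positivity

/-- For a real diagonalizable `3 × 3` matrix `A = U·D·U⁻¹` with real diagonal `D`,
`(2/(9κ₂²))·J2(A) ≤ ‖dev(A)‖_F² ≤ 18·κ₂²·J2(A)` where `κ₂ = ‖U‖₂·‖U⁻¹‖₂`. -/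
theorem dev_J2_estimate (U : Matrix (Fin 3) (Fin 3) ℝ) (hU : IsUnit U) (l : Fin 3 → ℝ)
    (A : Matrix (Fin 3) (Fin 3) ℝ) (hA : A = U * Matrix.diagonal l * U⁻¹) :
    (2 / (9 * (specNorm U * specNorm U⁻¹) ^ 2)) * J2 A ≤ frobNorm (dev A) ^ 2 ∧
      frobNorm (dev A) ^ 2 ≤ 18 * (specNorm U * specNorm U⁻¹) ^ 2 * J2 A := by
  have hdet : IsUnit U.det := (isUnit_iff_isUnit_det U).mp hU
  set N := dev (diagonal l)
  have hdev : dev A = U * N * U⁻¹ := by rw [hA, dev_conj hU]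
  have hN : N = U⁻¹ * dev A * U := by
    rw [hdev, ← Matrix.mul_assoc U⁻¹, nonsing_inv_mul_cancel_right U _ hdet,
      nonsing_inv_mul_cancel_left U _ hdet]
  have hJ2 : 2 * J2 A = frobNorm N ^ 2 := by
    rw [hA, J2_conj hU, two_mul_J2_of_isSymm (isSymm_diagonal l)]
  constructor
  · rw [div_mul_eq_mul_div]
    refine div_le_of_le_mul₀ (by positivity) (sq_nonneg _) ?_
    calc 2 * J2 A = frobNorm (U⁻¹ * dev A * U) ^ 2 := by rw [hJ2, hN]
      _ ≤ 9 * (specNorm U⁻¹ * specNorm U) ^ 2 * frobNorm (dev A) ^ 2 :=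
        frobNorm_mul_mul_sq_le _ _ _
      _ = _ := by ring
  · calc frobNorm (dev A) ^ 2 = frobNorm (U * N * U⁻¹) ^ 2 := by rw [hdev]
      _ ≤ 9 * (specNorm U * specNorm U⁻¹) ^ 2 * frobNorm N ^ 2 := frobNorm_mul_mul_sq_le _ _ _
      _ = _ := by rw [← hJ2]; ring
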